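/- arXiv:2110.09986 — 2 statements merged into one kernel-verified Lean document; each statement's English description precedes it below -/
import Mathlib

section
/- In the setting of the graph transform: g(X,Y) = (AX + R(X,Y), BY + U(X,Y)) with A invertible, max(‖DR‖,‖DU‖) ≤ γ, and φ : D → ℂ^{k₂} with Lip(φ) ≤ γ₀ ≤ 1, assume γ‖A^{-1}‖(1+γ₀) < 1. Let ψ be the map whose graph is g(graph φ), defined over π₀(g(graph φ)). Then for all X₁, X₂ in the domain of ψ, ‖ψ(X₁) − ψ(X₂)‖ ≤ ((‖B‖γ₀ + γ(1+γ₀)) / (‖A^{-1}‖^{-1} − γ(1+γ₀))) · ‖X₁ − X₂‖. -/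
/-- Lipschitz estimate of the graph transform.  With
`g(X,Y) = (AX + R(X,Y), BY + U(X,Y))`, `A` invertible, `max(‖DR‖,‖DU‖) ≤ γ`,
`Lip(φ) ≤ γ₀ ≤ 1` on `D` and `γ‖A⁻¹‖(1+γ₀) < 1`, the image of the graph of `φ` is a
graph of a map `ψ` satisfying
`‖ψ(X₁') − ψ(X₂')‖ ≤ ((‖B‖γ₀ + γ(1+γ₀))/(‖A⁻¹‖⁻¹ − γ(1+γ₀))) ‖X₁' − X₂'‖`:
stated for the image points of `x₁, x₂ ∈ D`. -/
theorem stmt5 (k₁ k₂ : ℕ) (γ γ₀ : NNReal)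
    (A : (Fin k₁ → ℂ) ≃L[ℂ] (Fin k₁ → ℂ))
    (B : (Fin k₂ → ℂ) →L[ℂ] (Fin k₂ → ℂ))
    (R : ((Fin k₁ → ℂ) × (Fin k₂ → ℂ)) → (Fin k₁ → ℂ))
    (U : ((Fin k₁ → ℂ) × (Fin k₂ → ℂ)) → (Fin k₂ → ℂ))
    (R' : ((Fin k₁ → ℂ) × (Fin k₂ → ℂ)) →
      (((Fin k₁ → ℂ) × (Fin k₂ → ℂ)) →L[ℂ] (Fin k₁ → ℂ)))
    (U' : ((Fin k₁ → ℂ) × (Fin k₂ → ℂ)) →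
      (((Fin k₁ → ℂ) × (Fin k₂ → ℂ)) →L[ℂ] (Fin k₂ → ℂ)))
    (hR : ∀ z, HasFDerivAt R (R' z) z) (hU : ∀ z, HasFDerivAt U (U' z) z)
    (hRγ : ∀ z, ‖R' z‖ ≤ γ) (hUγ : ∀ z, ‖U' z‖ ≤ γ)
    (D : Set (Fin k₁ → ℂ)) (φ : (Fin k₁ → ℂ) → (Fin k₂ → ℂ))
    (hφ : LipschitzOnWith γ₀ φ D) (hγ₀ : γ₀ ≤ 1)
    (h : (γ : ℝ) * ‖(A.symm : (Fin k₁ → ℂ) →L[ℂ] (Fin k₁ → ℂ))‖ * (1 + (γ₀ : ℝ)) < 1) :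
    ∀ x₁ ∈ D, ∀ x₂ ∈ D,
      ‖(B (φ x₁) + U (x₁, φ x₁)) - (B (φ x₂) + U (x₂, φ x₂))‖ ≤
        ((‖B‖ * (γ₀ : ℝ) + (γ : ℝ) * (1 + (γ₀ : ℝ))) /
          (‖(A.symm : (Fin k₁ → ℂ) →L[ℂ] (Fin k₁ → ℂ))‖⁻¹ - (γ : ℝ) * (1 + (γ₀ : ℝ)))) *
          ‖(A x₁ + R (x₁, φ x₁)) - (A x₂ + R (x₂, φ x₂))‖ := by
  intro x₁ hx₁ x₂ hx₂
  by_cases hx : x₁ = x₂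
  · subst hx; simp
  set nA : ℝ := ‖(A.symm : (Fin k₁ → ℂ) →L[ℂ] (Fin k₁ → ℂ))‖ with hnA
  set z₁ := (x₁, φ x₁)
  set z₂ := (x₂, φ x₂)
  have hΔ : x₁ - x₂ ≠ 0 := sub_ne_zero.mpr hx
  have hΔn : (0:ℝ) < ‖x₁ - x₂‖ := norm_pos_iff.mpr hΔ
  -- ‖x₁ - x₂‖ ≤ nA * ‖A (x₁ - x₂)‖
  have hle : ‖x₁ - x₂‖ ≤ nA * ‖A (x₁ - x₂)‖ := by
    have := (A.symm : (Fin k₁ → ℂ) →L[ℂ] (Fin k₁ → ℂ)).le_opNorm (A (x₁ - x₂))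
    simpa using this
  have hnA0 : 0 < nA := by
    by_contra h'
    push_neg at h'
    nlinarith [norm_nonneg (A (x₁ - x₂))]
  -- lower bound for ‖A(x₁-x₂)‖
  have hAlow : nA⁻¹ * ‖x₁ - x₂‖ ≤ ‖A (x₁ - x₂)‖ := by
    rw [inv_mul_le_iff₀ hnA0]
    exact hle
  -- Lipschitz of φ
  have hφn : ‖φ x₁ - φ x₂‖ ≤ (γ₀ : ℝ) * ‖x₁ - x₂‖ := by
    have := hφ.dist_le_mul x₁ hx₁ x₂ hx₂
    simpa [dist_eq_norm] using this
  have hγ₀1 : (γ₀ : ℝ) ≤ 1 := by exact_mod_cast hγ₀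
  have hz : ‖z₁ - z₂‖ ≤ ‖x₁ - x₂‖ := by
    have : z₁ - z₂ = (x₁ - x₂, φ x₁ - φ x₂) := rfl
    rw [this, Prod.norm_def]
    exact max_le le_rfl (hφn.trans (by nlinarith))
  -- mean value estimates
  have hUn : ‖U z₁ - U z₂‖ ≤ (γ : ℝ) * ‖x₁ - x₂‖ := by
    have := Convex.norm_image_sub_le_of_norm_hasFDerivWithin_le
      (f := U) (f' := U') (s := Set.univ)
      (fun z _ => (hU z).hasFDerivWithinAt) (fun z _ => hUγ z)
      convex_univ (Set.mem_univ z₂) (Set.mem_univ z₁)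
    calc ‖U z₁ - U z₂‖ ≤ (γ : ℝ) * ‖z₁ - z₂‖ := this
      _ ≤ (γ : ℝ) * ‖x₁ - x₂‖ := by
          exact mul_le_mul_of_nonneg_left hz γ.coe_nonneg
  have hRn : ‖R z₁ - R z₂‖ ≤ (γ : ℝ) * ‖x₁ - x₂‖ := by
    have := Convex.norm_image_sub_le_of_norm_hasFDerivWithin_le
      (f := R) (f' := R') (s := Set.univ)
      (fun z _ => (hR z).hasFDerivWithinAt) (fun z _ => hRγ z)
      convex_univ (Set.mem_univ z₂) (Set.mem_univ z₁)
    calc ‖R z₁ - R z₂‖ ≤ (γ : ℝ) * ‖z₁ - z₂‖ := this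
      _ ≤ (γ : ℝ) * ‖x₁ - x₂‖ := by
          exact mul_le_mul_of_nonneg_left hz γ.coe_nonneg
  -- numerator bound
  set N : ℝ := ‖B‖ * (γ₀ : ℝ) + (γ : ℝ) * (1 + (γ₀ : ℝ)) with hN
  have hNnn : 0 ≤ N := by positivity
  have hLHS : ‖(B (φ x₁) + U z₁) - (B (φ x₂) + U z₂)‖ ≤ N * ‖x₁ - x₂‖ := by
    have heq : (B (φ x₁) + U z₁) - (B (φ x₂) + U z₂)
        = B (φ x₁ - φ x₂) + (U z₁ - U z₂) := by
      rw [map_sub]; abel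
    rw [heq]
    calc ‖B (φ x₁ - φ x₂) + (U z₁ - U z₂)‖
        ≤ ‖B (φ x₁ - φ x₂)‖ + ‖U z₁ - U z₂‖ := norm_add_le _ _
      _ ≤ ‖B‖ * ‖φ x₁ - φ x₂‖ + (γ : ℝ) * ‖x₁ - x₂‖ :=
          add_le_add (B.le_opNorm _) hUn
      _ ≤ ‖B‖ * ((γ₀:ℝ) * ‖x₁ - x₂‖) + (γ : ℝ) * ‖x₁ - x₂‖ :=
          add_le_add (mul_le_mul_of_nonneg_left hφn (norm_nonneg _)) le_rfl
      _ ≤ N * ‖x₁ - x₂‖ := by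
          rw [hN]
          nlinarith [mul_nonneg (mul_nonneg γ.coe_nonneg γ₀.coe_nonneg)
            (norm_nonneg (x₁ - x₂))]
  -- denominator positivity
  set d : ℝ := nA⁻¹ - (γ : ℝ) * (1 + (γ₀ : ℝ)) with hd
  have hdpos : 0 < d := by
    rw [hd, sub_pos, ← one_div, lt_div_iff₀ hnA0]
    nlinarith
  -- lower bound for the image distance
  have hRHS : d * ‖x₁ - x₂‖ ≤ ‖(A x₁ + R z₁) - (A x₂ + R z₂)‖ := by
    have heq : (A x₁ + R z₁) - (A x₂ + R z₂)
        = A (x₁ - x₂) + (R z₁ - R z₂) := by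
      rw [map_sub]; abel
    rw [heq]
    have h1 : ‖A (x₁ - x₂)‖ - ‖R z₁ - R z₂‖ ≤ ‖A (x₁ - x₂) + (R z₁ - R z₂)‖ := by
      have h2 := norm_add_le (A (x₁ - x₂) + (R z₁ - R z₂)) (-(R z₁ - R z₂))
      simp only [add_neg_cancel_right, norm_neg] at h2
      linarith
    have h3 : ‖R z₁ - R z₂‖ ≤ (γ:ℝ) * (1 + (γ₀:ℝ)) * ‖x₁ - x₂‖ := by
      nlinarith [mul_nonneg (mul_nonneg γ.coe_nonneg γ₀.coe_nonneg)
        (norm_nonneg (x₁ - x₂))]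
    have h4 : d * ‖x₁ - x₂‖ ≤ ‖A (x₁ - x₂)‖ - ‖R z₁ - R z₂‖ := by
      rw [hd]
      have h5 : (nA⁻¹ - (γ:ℝ) * (1 + (γ₀:ℝ))) * ‖x₁ - x₂‖
          = nA⁻¹ * ‖x₁ - x₂‖ - (γ:ℝ) * (1 + (γ₀:ℝ)) * ‖x₁ - x₂‖ := by ring
      rw [h5]
      linarith only [hAlow, h3]
    linarith
  -- combine
  calc ‖(B (φ x₁) + U z₁) - (B (φ x₂) + U z₂)‖
      ≤ N * ‖x₁ - x₂‖ := hLHS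
    _ = (N / d) * (d * ‖x₁ - x₂‖) := by field_simp
    _ ≤ (N / d) * ‖(A x₁ + R z₁) - (A x₂ + R z₂)‖ :=
        mul_le_mul_of_nonneg_left hRHS (div_nonneg hNnn hdpos.le)
end

section
/- Let A, B, C, D be linear maps with A : ℂ^{k₁} → ℂ^{k₁} invertible, B : ℂ^{k₂} → ℂ^{k₂}, C : ℂ^{k₂} → ℂ^{k₁}, D : ℂ^{k₁} → ℂ^{k₂}, satisfying ‖A^{-1}‖^{-1} ≥ 1 − ε, ‖B‖ ≤ 1 + ε, ‖C‖ ≤ ε, ‖D‖ ≤ ε. Let φ : D₀ ⊆ ℂ^{k₁} → ℂ^{k₂} with Lip(φ) ≤ γ₀ ≤ 1. If 2ε/(1−ε) < 1 and ((1+ε)γ₀ + 2ε)/((1−ε) − 2ε) ≤ 2γ₀, then the image of the graph of φ under g₁(X,Y) = (AX + CY, BY + DX) is a graph of a map ψ over its projection to ℂ^{k₁}, with Lip(ψ) ≤ 2γ₀. -/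
/-- linear graph transform.  With `g₁(X,Y) = (AX + CY, BY + DX)`,
`‖A⁻¹‖⁻¹ ≥ 1−ε`, `‖B‖ ≤ 1+ε`, `‖C‖ ≤ ε`, `‖D‖ ≤ ε` (with `0 ≤ ε < 1`, as `ε = ε(η)` is
small), `Lip(φ) ≤ γ₀ ≤ 1` on `D₀`, `2ε/(1−ε) < 1` and `((1+ε)γ₀+2ε)/((1−ε)−2ε) ≤ 2γ₀`,
the image of the graph of `φ` under `g₁` is a graph over its projection to the first
factor (the projection is injective on it) of a map `ψ` with `Lip(ψ) ≤ 2γ₀`. -/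
theorem stmt15 (k₁ k₂ : ℕ) (ε : ℝ) (hε : 0 ≤ ε) (hε1 : ε < 1)
    (γ₀ : NNReal) (hγ₀ : γ₀ ≤ 1)
    (A : (Fin k₁ → ℂ) ≃L[ℂ] (Fin k₁ → ℂ))
    (B : (Fin k₂ → ℂ) →L[ℂ] (Fin k₂ → ℂ))
    (C : (Fin k₂ → ℂ) →L[ℂ] (Fin k₁ → ℂ))
    (Dm : (Fin k₁ → ℂ) →L[ℂ] (Fin k₂ → ℂ))
    (hA : 1 - ε ≤ ‖(A.symm : (Fin k₁ → ℂ) →L[ℂ] (Fin k₁ → ℂ))‖⁻¹)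
    (hB : ‖B‖ ≤ 1 + ε) (hC : ‖C‖ ≤ ε) (hD : ‖Dm‖ ≤ ε)
    (D₀ : Set (Fin k₁ → ℂ)) (φ : (Fin k₁ → ℂ) → (Fin k₂ → ℂ))
    (hφ : LipschitzOnWith γ₀ φ D₀)
    (h1 : 2 * ε / (1 - ε) < 1)
    (h2 : ((1 + ε) * (γ₀ : ℝ) + 2 * ε) / ((1 - ε) - 2 * ε) ≤ 2 * (γ₀ : ℝ)) :
    Set.InjOn (fun X => A X + C (φ X)) D₀ ∧
    ∀ x₁ ∈ D₀, ∀ x₂ ∈ D₀,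
      ‖(B (φ x₁) + Dm x₁) - (B (φ x₂) + Dm x₂)‖ ≤
        2 * (γ₀ : ℝ) * ‖(A x₁ + C (φ x₁)) - (A x₂ + C (φ x₂))‖ := by
  have hpos : (0:ℝ) < 1 - ε := by linarith
  have h3e : 2 * ε < 1 - ε := by
    have := (div_lt_one hpos).mp h1; linarith
  have hγ0 : (0:ℝ) ≤ (γ₀ : ℝ) := γ₀.coe_nonneg
  have hγ1 : (γ₀ : ℝ) ≤ 1 := by exact_mod_cast hγ₀
  have hden : (0:ℝ) < (1 - ε) - 2 * ε := by linarith
  have h2' : (1 + ε) * (γ₀ : ℝ) + 2 * ε ≤ 2 * (γ₀ : ℝ) * ((1 - ε) - 2 * ε) := by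
    have := (div_le_iff₀ hden).mp h2; linarith
  have hAs : (0:ℝ) < ‖(A.symm : (Fin k₁ → ℂ) →L[ℂ] (Fin k₁ → ℂ))‖ := by
    rcases lt_or_eq_of_le (norm_nonneg (A.symm : (Fin k₁ → ℂ) →L[ℂ] (Fin k₁ → ℂ))) with h | h
    · exact h
    · rw [← h] at hA; simp at hA; linarith
  have hAlow : ∀ x : Fin k₁ → ℂ, (1 - ε) * ‖x‖ ≤ ‖A x‖ := by
    intro x
    have hx : ‖x‖ ≤ ‖(A.symm : (Fin k₁ → ℂ) →L[ℂ] (Fin k₁ → ℂ))‖ * ‖A x‖ := by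
      calc ‖x‖ = ‖(A.symm : (Fin k₁ → ℂ) →L[ℂ] (Fin k₁ → ℂ)) (A x)‖ := by simp
        _ ≤ _ := (A.symm : (Fin k₁ → ℂ) →L[ℂ] (Fin k₁ → ℂ)).le_opNorm _
    have hmul : (1 - ε) * ‖(A.symm : (Fin k₁ → ℂ) →L[ℂ] (Fin k₁ → ℂ))‖ ≤ 1 := by
      rw [← inv_inv ‖(A.symm : (Fin k₁ → ℂ) →L[ℂ] (Fin k₁ → ℂ))‖]
      rw [mul_inv_le_iff₀ (by positivity)]
      simpa using hA
    nlinarith [norm_nonneg (A x), norm_nonneg x]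
  -- key lower bound on the first component
  have key : ∀ x₁ ∈ D₀, ∀ x₂ ∈ D₀,
      ((1 - ε) - 2 * ε) * ‖x₁ - x₂‖ ≤ ‖(A x₁ + C (φ x₁)) - (A x₂ + C (φ x₂))‖ := by
    intro x₁ h₁ x₂ h₂
    have hφd : ‖φ x₁ - φ x₂‖ ≤ (γ₀ : ℝ) * ‖x₁ - x₂‖ := by
      have := hφ.dist_le_mul x₁ h₁ x₂ h₂
      simpa [dist_eq_norm] using this
    have hCd : ‖C (φ x₁) - C (φ x₂)‖ ≤ ε * ((γ₀ : ℝ) * ‖x₁ - x₂‖) := by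
      calc ‖C (φ x₁) - C (φ x₂)‖ = ‖C (φ x₁ - φ x₂)‖ := by rw [map_sub]
        _ ≤ ‖C‖ * ‖φ x₁ - φ x₂‖ := C.le_opNorm _
        _ ≤ ε * ((γ₀ : ℝ) * ‖x₁ - x₂‖) := by
            apply mul_le_mul hC hφd (norm_nonneg _) hε
    have hAd : (1 - ε) * ‖x₁ - x₂‖ ≤ ‖A x₁ - A x₂‖ := by
      have : A x₁ - A x₂ = A (x₁ - x₂) := by simp [map_sub]
      rw [this]; exact hAlow _
    have htri : ‖A x₁ - A x₂‖ - ‖C (φ x₁) - C (φ x₂)‖ ≤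
        ‖(A x₁ + C (φ x₁)) - (A x₂ + C (φ x₂))‖ := by
      have h := norm_sub_norm_le (A x₁ - A x₂) (C (φ x₂) - C (φ x₁))
      have heq : A x₁ - A x₂ - (C (φ x₂) - C (φ x₁)) =
          (A x₁ + C (φ x₁)) - (A x₂ + C (φ x₂)) := by abel
      rw [heq] at h
      have : ‖C (φ x₂) - C (φ x₁)‖ = ‖C (φ x₁) - C (φ x₂)‖ := norm_sub_rev _ _
      linarith
    have hεγ : ε * ((γ₀ : ℝ) * ‖x₁ - x₂‖) ≤ 2 * ε * ‖x₁ - x₂‖ := by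
      nlinarith [mul_nonneg hε (norm_nonneg (x₁ - x₂)),
        mul_nonneg (mul_nonneg hε (sub_nonneg.mpr hγ1)) (norm_nonneg (x₁ - x₂))]
    linarith
  constructor
  · intro x₁ h₁ x₂ h₂ heq
    simp only at heq
    have hk := key x₁ h₁ x₂ h₂
    rw [heq] at hk
    simp only [sub_self, norm_zero] at hk
    have : ‖x₁ - x₂‖ ≤ 0 := by nlinarith [norm_nonneg (x₁ - x₂)]
    have : x₁ - x₂ = 0 := norm_eq_zero.mp (le_antisymm this (norm_nonneg _))
    exact sub_eq_zero.mp this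
  · intro x₁ h₁ x₂ h₂
    have hφd : ‖φ x₁ - φ x₂‖ ≤ (γ₀ : ℝ) * ‖x₁ - x₂‖ := by
      have := hφ.dist_le_mul x₁ h₁ x₂ h₂
      simpa [dist_eq_norm] using this
    have hBd : ‖B (φ x₁) - B (φ x₂)‖ ≤ (1 + ε) * ((γ₀ : ℝ) * ‖x₁ - x₂‖) := by
      calc ‖B (φ x₁) - B (φ x₂)‖ = ‖B (φ x₁ - φ x₂)‖ := by rw [map_sub]
        _ ≤ ‖B‖ * ‖φ x₁ - φ x₂‖ := B.le_opNorm _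
        _ ≤ _ := mul_le_mul hB hφd (norm_nonneg _) (by linarith)
    have hDd : ‖Dm x₁ - Dm x₂‖ ≤ ε * ‖x₁ - x₂‖ := by
      calc ‖Dm x₁ - Dm x₂‖ = ‖Dm (x₁ - x₂)‖ := by rw [map_sub]
        _ ≤ ‖Dm‖ * ‖x₁ - x₂‖ := Dm.le_opNorm _
        _ ≤ _ := mul_le_mul_of_nonneg_right hD (norm_nonneg _)
    have htri : ‖(B (φ x₁) + Dm x₁) - (B (φ x₂) + Dm x₂)‖ ≤
        ‖B (φ x₁) - B (φ x₂)‖ + ‖Dm x₁ - Dm x₂‖ := by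
      have heq : (B (φ x₁) + Dm x₁) - (B (φ x₂) + Dm x₂) =
          (B (φ x₁) - B (φ x₂)) + (Dm x₁ - Dm x₂) := by abel
      rw [heq]; exact norm_add_le _ _
    have hk := key x₁ h₁ x₂ h₂
    nlinarith [norm_nonneg (x₁ - x₂), norm_nonneg ((A x₁ + C (φ x₁)) - (A x₂ + C (φ x₂)))]
end
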